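/- arXiv:2112.02331 — 4 statements merged into one kernel-verified Lean document; each statement's English description precedes it below -/
import Mathlib

section
/- Let L ≥ 1. Let θ_1,…,θ_L, a_1,…,a_L, b_1,…,b_L be real numbers and set Θ = diag(e^{iθ_1},…,e^{iθ_L}). Let Δθ_1,…,Δθ_L be independent real-valued random variables with E[cos Δθ_ℓ] = χ and E[sin Δθ_ℓ] = 0 for all ℓ, and set Φ = diag(e^{iΔθ_1},…,e^{iΔθ_L}). Let h̄_a, h̄_b ∈ ℂ^L have entries h̄_{a,ℓ} = e^{i a_ℓ} and h̄_{b,ℓ} = e^{i b_ℓ}. Let h̃_a, h̃_b be ℂ^L-valued random vectors with mean zero, E[h̃_a h̃_a^H] = I_L and E[h̃_b h̃_b^H] = I_L, such that h̃_a, h̃_b, and (Δθ_1,…,Δθ_L) are mutually independent. For ε, β > 0 define h_a = √(ε/(ε+1)) h̄_a + √(1/(ε+1)) h̃_a and h_b = √(β/(β+1)) h̄_b + √(1/(β+1)) h̃_b. Then E[|h_b^T Θ Φ h_a|²] = (ε β Γ̃ + L(ε + β) + L)/((ε+1)(β+1)), where Γ̃ = L + 2χ² Σ_{1 ≤ m <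 n ≤ L} cos((θ_n + a_n + b_n) − (θ_m + a_m + b_m)). -/
open MeasureTheory ProbabilityTheory Complex Finset

open scoped ComplexConjugate

/-!
Expanding `|∑ₗ Fₗ|² = ∑ₖ ∑ₗ Fₖ conj Fₗ`, independence factors each `E[Fₖ conj Fₗ]` into the
phase-noise correlation `E[e^{iΔθₖ} e^{-iΔθₗ}]` (`1` on the diagonal, `χ²` off it) and the two
Rician correlations `E[h_{a,k} conj h_{a,l}]` (`1` on the diagonal, `ε/(ε+1) e^{i(aₖ - aₗ)}` off
it, since the scattered part is centred and white). So each diagonal term contributes `1` and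
the off-diagonal term `(k, l)` contributes `χ² εβ/((ε+1)(β+1)) cos(ψₖ - ψₗ)` with
`ψ = θ + a + b`; pairing `(k, l)` with `(l, k)` leaves the sum over `m < n`.
-/

lemma exp_I_mul_mul_conj_exp_I_mul (x y : ℝ) :
    Complex.exp (I * x) * conj (Complex.exp (I * y)) = Complex.exp (I * ↑(x - y)) := by
  rw [← Complex.exp_conj, map_mul, conj_I, conj_ofReal, ← Complex.exp_add]
  push_cast
  ring_nf

lemma re_ofReal_mul_exp_I_mul (r x : ℝ) :
    ((r : ℂ) * Complex.exp (I * x)).re = r * Real.cos x := by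
  rw [re_ofReal_mul, mul_comm I, exp_mul_I]
  simp [← ofReal_cos, ← ofReal_sin]

lemma sum_sum_eq_sum_add_two_mul_sum_lt {ι R : Type*} [Fintype ι] [LinearOrder ι]
    [CommSemiring R] {F : ι → ι → R} (hF : ∀ k l, F k l = F l k) :
    ∑ k, ∑ l, F k l = ∑ k, F k k + 2 * ∑ k, ∑ l ∈ univ.filter (· < k), F k l := by
  have hrow : ∀ k, ∑ l, F k l
      = ∑ l ∈ univ.filter (· < k), F k l + F k k + ∑ l ∈ univ.filter (k < ·), F k l := by
    intro k
    have hdiag : F k k = ∑ l, if l = k then F k l else 0 := by simp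
    rw [sum_filter, sum_filter, hdiag, ← sum_add_distrib, ← sum_add_distrib]
    refine sum_congr rfl fun l _ => ?_
    rcases lt_trichotomy l k with h | rfl | h
    · simp [h, h.ne, h.not_gt]
    · simp
    · simp [h, h.ne', h.not_gt]
  have hupper :
      ∑ k, ∑ l ∈ univ.filter (k < ·), F k l = ∑ k, ∑ l ∈ univ.filter (· < k), F k l := by
    rw [sum_comm' (t' := univ) (s' := fun l => univ.filter (· < l)) (by simp)]
    exact sum_congr rfl fun k _ => sum_congr rfl fun l _ => hF l k
  simp only [hrow, sum_add_distrib, hupper]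
  ring

lemma sum_sum_re_ite_exp_I_mul {ι : Type*} [Fintype ι] [LinearOrder ι] (c : ℝ) (ψ : ι → ℝ) :
    ∑ k, ∑ l, (if k = l then 1 else (c : ℂ) * Complex.exp (I * ↑(ψ k - ψ l))).re
      = Fintype.card ι + 2 * c * ∑ k, ∑ l ∈ univ.filter (· < k), Real.cos (ψ k - ψ l) := by
  have hre : ∀ k l, (if k = l then 1 else (c : ℂ) * Complex.exp (I * ↑(ψ k - ψ l))).re
      = if k = l then 1 else c * Real.cos (ψ k - ψ l) := by
    intro k l
    split_ifs
    · simp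
    · exact re_ofReal_mul_exp_I_mul _ _
  have hsymm : ∀ k l, (if k = l then 1 else c * Real.cos (ψ k - ψ l))
      = if l = k then 1 else c * Real.cos (ψ l - ψ k) := by
    intro k l
    rw [← neg_sub (ψ l), Real.cos_neg]
    simp only [eq_comm]
  simp_rw [hre]
  rw [sum_sum_eq_sum_add_two_mul_sum_lt hsymm, mul_assoc, mul_sum]
  simp only [if_true, sum_const, card_univ, nsmul_eq_mul, mul_one, mul_sum]
  congr 1
  refine sum_congr rfl fun k _ => sum_congr rfl fun l hl => ?_
  rw [if_neg (mem_filter.1 hl).2.ne']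

noncomputable def rician (κ φ : ℝ) (z : ℂ) : ℂ :=
  (Real.sqrt (κ / (κ + 1)) : ℂ) * Complex.exp (I * φ) + (Real.sqrt (1 / (κ + 1)) : ℂ) * z

section Probability

variable {Ω ι : Type*} [MeasurableSpace Ω] {μ : Measure Ω}

lemma integral_norm_sum_sq [Fintype ι] {f : ι → Ω → ℂ}
    (hf : ∀ k l, Integrable (fun ω => f k ω * conj (f l ω)) μ) :
    ∫ ω, ‖∑ k, f k ω‖ ^ 2 ∂μ = ∑ k, ∑ l, (∫ ω, f k ω * conj (f l ω) ∂μ).re := by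
  have hsq : ∀ ω, ‖∑ k, f k ω‖ ^ 2 = (∑ k, ∑ l, f k ω * conj (f l ω)).re := fun ω => by
    rw [← sum_mul_sum, ← map_sum, mul_conj, normSq_eq_norm_sq, ofReal_re]
  have hint : ∀ k, Integrable (fun ω => ∑ l, f k ω * conj (f l ω)) μ :=
    fun k => integrable_finsetSum _ fun l _ => hf k l
  have hre := integral_re (integrable_finsetSum univ fun k _ => hint k)
  simp only [RCLike.re_to_complex] at hre
  simp_rw [hsq]
  rw [hre, integral_finsetSum _ fun k _ => hint k, re_sum]
  exact sum_congr rfl fun k _ => by rw [integral_finsetSum _ fun l _ => hf k l, re_sum]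

lemma integral_add_mul_mul_conj_add_mul [IsProbabilityMeasure μ] {X Y : Ω → ℂ}
    (hX : MemLp X 2 μ) (hY : MemLp Y 2 μ) (hXm : ∫ ω, X ω ∂μ = 0) (hYm : ∫ ω, Y ω ∂μ = 0)
    (u v s t : ℂ) :
    ∫ ω, (u + s * X ω) * conj (v + t * Y ω) ∂μ
      = u * conj v + s * conj t * ∫ ω, X ω * conj (Y ω) ∂μ := by
  have hexpand : ∀ ω, (u + s * X ω) * conj (v + t * Y ω) = u * conj v
      + (u * conj t * conj (Y ω) + (s * conj v * X ω + s * conj t * (X ω * conj (Y ω)))) :=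
    fun ω => by simp only [map_add, map_mul]; ring
  have hXi : Integrable X μ := hX.integrable one_le_two
  have hYi : Integrable (fun ω => conj (Y ω)) μ := hY.star.integrable one_le_two
  have hXYi : Integrable (fun ω => X ω * conj (Y ω)) μ := hX.integrable_mul hY.star
  have h1 : Integrable (fun ω => u * conj t * conj (Y ω)) μ := hYi.const_mul _
  have h2 : Integrable (fun ω => s * conj v * X ω) μ := hXi.const_mul _
  have h3 : Integrable (fun ω => s * conj t * (X ω * conj (Y ω))) μ := hXYi.const_mul _
  have h23 : Integrable (fun ω => s * conj v * X ω + s * conj t * (X ω * conj (Y ω))) μ :=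
    h2.add h3
  have h123 : Integrable (fun ω => u * conj t * conj (Y ω)
      + (s * conj v * X ω + s * conj t * (X ω * conj (Y ω)))) μ := h1.add h23
  simp_rw [hexpand]
  rw [integral_add (integrable_const _) h123, integral_add h1 h23, integral_add h2 h3]
  simp [integral_const_mul, integral_conj, hXm, hYm]

lemma MeasureTheory.MemLp.rician [IsFiniteMeasure μ] {Z : Ω → ℂ} (hZ : MemLp Z 2 μ) (κ φ : ℝ) :
    MemLp (fun ω => rician κ φ (Z ω)) 2 μ :=
  (memLp_const ((Real.sqrt (κ / (κ + 1)) : ℂ) * Complex.exp (I * φ))).add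
    (hZ.const_mul (Real.sqrt (1 / (κ + 1)) : ℂ))

lemma integral_rician_mul_conj_rician [IsProbabilityMeasure μ] [DecidableEq ι] {κ : ℝ}
    (hκ : 0 ≤ κ) (φ : ι → ℝ) {Z : Ω → ι → ℂ} (hZ : ∀ ℓ, MemLp (fun ω => Z ω ℓ) 2 μ)
    (hmean : ∀ ℓ, ∫ ω, Z ω ℓ ∂μ = 0)
    (hcov : ∀ k l, ∫ ω, Z ω k * conj (Z ω l) ∂μ = if k = l then 1 else 0) (k l : ι) :
    ∫ ω, rician κ (φ k) (Z ω k) * conj (rician κ (φ l) (Z ω l)) ∂μ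
      = if k = l then 1 else ((κ / (κ + 1) : ℝ) : ℂ) * Complex.exp (I * ↑(φ k - φ l)) := by
  have hsq : ∀ r : ℝ, 0 ≤ r → (Real.sqrt r : ℂ) * conj (Real.sqrt r : ℂ) = r := fun r hr => by
    rw [conj_ofReal, ← ofReal_mul, Real.mul_self_sqrt hr]
  simp only [rician]
  rw [integral_add_mul_mul_conj_add_mul (hZ k) (hZ l) (hmean k) (hmean l), hcov, map_mul,
    mul_mul_mul_comm, hsq _ (by positivity), hsq _ (by positivity),
    exp_I_mul_mul_conj_exp_I_mul]
  split_ifs with hkl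
  · have hκ1 : κ + 1 ≠ 0 := by positivity
    subst hkl
    simp only [sub_self, ofReal_zero, mul_zero, Complex.exp_zero, mul_one]
    norm_cast
    field_simp
  · simp

lemma integral_exp_I_mul [IsProbabilityMeasure μ] {T : Ω → ℝ} (hT : Measurable T) {χ : ℝ}
    (hcos : ∫ ω, Real.cos (T ω) ∂μ = χ) (hsin : ∫ ω, Real.sin (T ω) ∂μ = 0) :
    ∫ ω, Complex.exp (I * T ω) ∂μ = χ := by
  have hbound {f : ℝ → ℝ} (hf : Measurable f) (hf1 : ∀ x, |f x| ≤ 1) :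
      Integrable (fun ω => (f (T ω) : ℂ)) μ :=
    (Integrable.of_bound (hf.comp hT).aestronglyMeasurable 1 (.of_forall fun ω => hf1 _)).ofReal
  simp_rw [mul_comm I, exp_mul_I, ← ofReal_cos, ← ofReal_sin]
  rw [integral_add (hbound Real.measurable_cos Real.abs_cos_le_one)
    ((hbound Real.measurable_sin Real.abs_sin_le_one).mul_const I),
    integral_mul_const, integral_complex_ofReal, integral_complex_ofReal, hcos, hsin]
  simp

lemma integral_exp_I_mul_mul_conj_exp_I_mul [IsProbabilityMeasure μ] [DecidableEq ι]
    {T : ι → Ω → ℝ} (hT : ∀ ℓ, Measurable (T ℓ)) (hind : iIndepFun T μ) {χ : ℝ}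
    (hcos : ∀ ℓ, ∫ ω, Real.cos (T ℓ ω) ∂μ = χ) (hsin : ∀ ℓ, ∫ ω, Real.sin (T ℓ ω) ∂μ = 0)
    (k l : ι) :
    ∫ ω, Complex.exp (I * T k ω) * conj (Complex.exp (I * T l ω)) ∂μ
      = if k = l then 1 else (χ : ℂ) ^ 2 := by
  split_ifs with hkl
  · simp [hkl, exp_I_mul_mul_conj_exp_I_mul]
  have hindep : IndepFun (fun ω => Complex.exp (I * T k ω))
      (fun ω => conj (Complex.exp (I * T l ω))) μ :=
    (hind.indepFun hkl).comp (φ := fun x : ℝ => Complex.exp (I * x))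
      (ψ := fun x : ℝ => conj (Complex.exp (I * x))) (by fun_prop) (by fun_prop)
  rw [hindep.integral_fun_mul_eq_mul_integral (by fun_prop) (by fun_prop), integral_conj,
    integral_exp_I_mul (hT k) (hcos k) (hsin k), integral_exp_I_mul (hT l) (hcos l) (hsin l),
    conj_ofReal, sq]

lemma ProbabilityTheory.IndepFun.integral_fun_comp_mul_comp_mul_comp {α β γ : Type*}
    [MeasurableSpace α] [MeasurableSpace β] [MeasurableSpace γ] {U : Ω → α} {V : Ω → β}
    {W : Ω → γ} (hUV : IndepFun U V μ)
    (hUVW : IndepFun (fun ω => (U ω, V ω)) W μ) {f : α → ℂ} {g : β → ℂ} {h : γ → ℂ}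
    (hf : Measurable f) (hg : Measurable g) (hh : Measurable h)
    (hfU : AEStronglyMeasurable (fun ω => f (U ω)) μ)
    (hgV : AEStronglyMeasurable (fun ω => g (V ω)) μ)
    (hhW : AEStronglyMeasurable (fun ω => h (W ω)) μ) :
    ∫ ω, f (U ω) * g (V ω) * h (W ω) ∂μ
      = (∫ ω, f (U ω) ∂μ) * (∫ ω, g (V ω) ∂μ) * ∫ ω, h (W ω) ∂μ := by
  have hfg : IndepFun (fun ω => f (U ω)) (fun ω => g (V ω)) μ := hUV.comp hf hg
  have hfgh : IndepFun (fun ω => f (U ω) * g (V ω)) (fun ω => h (W ω)) μ :=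
    hUVW.comp (φ := fun p : α × β => f p.1 * g p.2) (by fun_prop) hh
  rw [hfgh.integral_fun_mul_eq_mul_integral (hfU.mul hgV) hhW,
    hfg.integral_fun_mul_eq_mul_integral hfU hgV]

lemma cascade_mul_conj_integrable_and_integral_eq [IsProbabilityMeasure μ] [DecidableEq ι]
    {ε β χ : ℝ} (hε : 0 ≤ ε) (hβ : 0 ≤ β) (θ a b : ι → ℝ) {Δθ : ι → Ω → ℝ}
    (hΔθ_meas : ∀ ℓ, Measurable (Δθ ℓ)) (hΔθ_indep : iIndepFun Δθ μ)
    (hΔθ_cos : ∀ ℓ, ∫ ω, Real.cos (Δθ ℓ ω) ∂μ = χ) (hΔθ_sin : ∀ ℓ, ∫ ω, Real.sin (Δθ ℓ ω) ∂μ = 0)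
    {Za Zb : Ω → ι → ℂ}
    (hZa_l2 : ∀ ℓ, MemLp (fun ω => Za ω ℓ) 2 μ) (hZb_l2 : ∀ ℓ, MemLp (fun ω => Zb ω ℓ) 2 μ)
    (hZa_mean : ∀ ℓ, ∫ ω, Za ω ℓ ∂μ = 0) (hZb_mean : ∀ ℓ, ∫ ω, Zb ω ℓ ∂μ = 0)
    (hZa_cov : ∀ k l, ∫ ω, Za ω k * conj (Za ω l) ∂μ = if k = l then 1 else 0)
    (hZb_cov : ∀ k l, ∫ ω, Zb ω k * conj (Zb ω l) ∂μ = if k = l then 1 else 0)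
    (hab_indep : IndepFun Za Zb μ)
    (habΔ_indep : IndepFun (fun ω => (Za ω, Zb ω)) (fun ω ℓ => Δθ ℓ ω) μ)
    {F : ι → Ω → ℂ} (hF : ∀ ℓ ω, F ℓ ω = rician β (b ℓ) (Zb ω ℓ) * Complex.exp (I * θ ℓ)
      * Complex.exp (I * Δθ ℓ ω) * rician ε (a ℓ) (Za ω ℓ)) (k l : ι) :
    Integrable (fun ω => F k ω * conj (F l ω)) μ ∧
      ∫ ω, F k ω * conj (F l ω) ∂μ = if k = l then 1
        else ((χ ^ 2 * (ε / (ε + 1)) * (β / (β + 1)) : ℝ) : ℂ)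
          * Complex.exp (I * ↑((θ k + a k + b k) - (θ l + a l + b l))) := by
  set A : (ι → ℂ) → ℂ := fun v => rician ε (a k) (v k) * conj (rician ε (a l) (v l))
  set B : (ι → ℂ) → ℂ := fun v => rician β (b k) (v k) * conj (rician β (b l) (v l))
  set P : (ι → ℝ) → ℂ := fun v => Complex.exp (I * v k) * conj (Complex.exp (I * v l))
  have hfac : ∀ ω, F k ω * conj (F l ω) = Complex.exp (I * ↑(θ k - θ l))
      * (A (Za ω) * B (Zb ω) * P (fun ℓ => Δθ ℓ ω)) := fun ω => by
    simp only [hF, A, B, P, map_mul, ← exp_I_mul_mul_conj_exp_I_mul]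
    ring
  have hA : Integrable (fun ω => A (Za ω)) μ :=
    ((hZa_l2 k).rician ε (a k)).integrable_mul ((hZa_l2 l).rician ε (a l)).star
  have hB : Integrable (fun ω => B (Zb ω)) μ :=
    ((hZb_l2 k).rician β (b k)).integrable_mul ((hZb_l2 l).rician β (b l)).star
  have hAm : Measurable A := by unfold A rician; fun_prop
  have hBm : Measurable B := by unfold B rician; fun_prop
  have hPm : Measurable P := by fun_prop
  have hΔm : Measurable fun ω ℓ => Δθ ℓ ω := measurable_pi_lambda _ hΔθ_meas
  have hP1 : ∀ ω, ‖P (fun ℓ => Δθ ℓ ω)‖ ≤ 1 := fun ω => by simp [P]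
  refine ⟨?_, ?_⟩
  · simp_rw [hfac]
    exact (((hab_indep.comp hAm hBm).integrable_mul hA hB).mul_bdd
      (hPm.comp hΔm).aestronglyMeasurable (.of_forall hP1)).const_mul _
  · rw [integral_congr_ae (.of_forall hfac), integral_const_mul,
      hab_indep.integral_fun_comp_mul_comp_mul_comp habΔ_indep hAm hBm hPm hA.1 hB.1
        (hPm.comp hΔm).aestronglyMeasurable,
      integral_rician_mul_conj_rician hε a hZa_l2 hZa_mean hZa_cov,
      integral_rician_mul_conj_rician hβ b hZb_l2 hZb_mean hZb_cov,
      integral_exp_I_mul_mul_conj_exp_I_mul hΔθ_meas hΔθ_indep hΔθ_cos hΔθ_sin]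
    split_ifs with hkl
    · simp [hkl]
    · have hsum : ((θ k + a k + b k) - (θ l + a l + b l) : ℝ)
          = (θ k - θ l) + (a k - a l) + (b k - b l) := by ring
      rw [hsum, ofReal_add, ofReal_add, mul_add, mul_add, Complex.exp_add, Complex.exp_add]
      push_cast
      ring

end Probability

theorem cascaded_rician_second_moment_phase_noise_general {Ω : Type*} [MeasurableSpace Ω]
    (μ : Measure Ω) [IsProbabilityMeasure μ] (L : ℕ)
    (θ a b : Fin L → ℝ) (ε β χ : ℝ) (hε : 0 < ε) (hβ : 0 < β)
    (Δθ : Fin L → Ω → ℝ) (hΔθ_meas : ∀ ℓ, Measurable (Δθ ℓ))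
    (hΔθ_indep : ProbabilityTheory.iIndepFun Δθ μ)
    (hΔθ_cos : ∀ ℓ, ∫ ω, Real.cos (Δθ ℓ ω) ∂μ = χ)
    (hΔθ_sin : ∀ ℓ, ∫ ω, Real.sin (Δθ ℓ ω) ∂μ = 0)
    (hta htb : Ω → Fin L → ℂ)
    (hta_l2 : ∀ ℓ, MeasureTheory.MemLp (fun ω => hta ω ℓ) 2 μ)
    (htb_l2 : ∀ ℓ, MeasureTheory.MemLp (fun ω => htb ω ℓ) 2 μ)
    (hta_mean : ∀ ℓ, ∫ ω, hta ω ℓ ∂μ = 0) (htb_mean : ∀ ℓ, ∫ ω, htb ω ℓ ∂μ = 0)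
    (hta_cov : ∀ k l, ∫ ω, hta ω k * (starRingEnd ℂ) (hta ω l) ∂μ = if k = l then 1 else 0)
    (htb_cov : ∀ k l, ∫ ω, htb ω k * (starRingEnd ℂ) (htb ω l) ∂μ = if k = l then 1 else 0)
    (hab_indep : ProbabilityTheory.IndepFun hta htb μ)
    (habΔ_indep : ProbabilityTheory.IndepFun (fun ω => (hta ω, htb ω))
      (fun ω => fun ℓ => Δθ ℓ ω) μ)
    (ha hb : Ω → Fin L → ℂ)
    (hha : ∀ ω ℓ, ha ω ℓ = (Real.sqrt (ε / (ε + 1)) : ℂ) * Complex.exp (Complex.I * (a ℓ : ℂ))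
      + (Real.sqrt (1 / (ε + 1)) : ℂ) * hta ω ℓ)
    (hhb : ∀ ω ℓ, hb ω ℓ = (Real.sqrt (β / (β + 1)) : ℂ) * Complex.exp (Complex.I * (b ℓ : ℂ))
      + (Real.sqrt (1 / (β + 1)) : ℂ) * htb ω ℓ) :
    ∫ ω, ‖(∑ ℓ : Fin L,
        hb ω ℓ * Complex.exp (Complex.I * (θ ℓ : ℂ)) *
          Complex.exp (Complex.I * (Δθ ℓ ω : ℂ)) * ha ω ℓ)‖ ^ 2 ∂μ =
      (ε * β * ((L : ℝ) + 2 * χ ^ 2 *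
          ∑ n : Fin L, ∑ m ∈ Finset.univ.filter (fun m => m < n),
            Real.cos ((θ n + a n + b n) - (θ m + a m + b m)))
        + (L : ℝ) * (ε + β) + (L : ℝ)) / ((ε + 1) * (β + 1)) := by
  have hterm := cascade_mul_conj_integrable_and_integral_eq hε.le hβ.le θ a b hΔθ_meas
    hΔθ_indep hΔθ_cos hΔθ_sin hta_l2 htb_l2 hta_mean htb_mean hta_cov htb_cov hab_indep habΔ_indep
    (F := fun ℓ ω => hb ω ℓ * Complex.exp (I * θ ℓ) * Complex.exp (I * Δθ ℓ ω) * ha ω ℓ)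
    (fun ℓ ω => by rw [hha, hhb]; rfl)
  rw [integral_norm_sum_sq fun k l => (hterm k l).1]
  simp only [fun k l => (hterm k l).2]
  rw [sum_sum_re_ite_exp_I_mul _ fun ℓ => θ ℓ + a ℓ + b ℓ, Fintype.card_fin]
  field_simp
  ring

/-- Second moment of the cascaded Rician channel through an RIS with
deterministic phase-shift matrix `Θ = diag(e^{iθ_1}, …, e^{iθ_L})` and random phase-noise
matrix `Φ = diag(e^{iΔθ_1}, …, e^{iΔθ_L})`, where the `Δθ_ℓ` are independent with
`E[cos Δθ_ℓ] = χ` and `E[sin Δθ_ℓ] = 0`: with LoS components `h̄_{a,ℓ} = e^{i a_ℓ}`,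
`h̄_{b,ℓ} = e^{i b_ℓ}`, zero-mean identity-covariance scattered components `h̃_a, h̃_b`
such that `h̃_a`, `h̃_b` and `(Δθ_1, …, Δθ_L)` are mutually independent, and Rician factors
`ε, β > 0`, the channels `h_a = √(ε/(ε+1)) h̄_a + √(1/(ε+1)) h̃_a` and
`h_b = √(β/(β+1)) h̄_b + √(1/(β+1)) h̃_b` satisfy
`E[|h_b^T Θ Φ h_a|²] = (ε β Γ̃ + L(ε+β) + L)/((ε+1)(β+1))`, where
`Γ̃ = L + 2χ² ∑_{1 ≤ m < n ≤ L} cos ((θ_n + a_n + b_n) - (θ_m + a_m + b_m))`. -/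
theorem cascaded_rician_second_moment_phase_noise {Ω : Type*} [MeasurableSpace Ω]
    (μ : Measure Ω) [IsProbabilityMeasure μ] (L : ℕ) (hL : 1 ≤ L)
    (θ a b : Fin L → ℝ) (ε β χ : ℝ) (hε : 0 < ε) (hβ : 0 < β)
    (Δθ : Fin L → Ω → ℝ) (hΔθ_meas : ∀ ℓ, Measurable (Δθ ℓ))
    (hΔθ_indep : ProbabilityTheory.iIndepFun Δθ μ)
    (hΔθ_cos : ∀ ℓ, ∫ ω, Real.cos (Δθ ℓ ω) ∂μ = χ)
    (hΔθ_sin : ∀ ℓ, ∫ ω, Real.sin (Δθ ℓ ω) ∂μ = 0)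
    (hta htb : Ω → Fin L → ℂ)
    (hta_meas : Measurable hta) (htb_meas : Measurable htb)
    (hta_l2 : ∀ ℓ, MeasureTheory.MemLp (fun ω => hta ω ℓ) 2 μ)
    (htb_l2 : ∀ ℓ, MeasureTheory.MemLp (fun ω => htb ω ℓ) 2 μ)
    (hta_mean : ∀ ℓ, ∫ ω, hta ω ℓ ∂μ = 0) (htb_mean : ∀ ℓ, ∫ ω, htb ω ℓ ∂μ = 0)
    (hta_cov : ∀ k l, ∫ ω, hta ω k * (starRingEnd ℂ) (hta ω l) ∂μ = if k = l then 1 else 0)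
    (htb_cov : ∀ k l, ∫ ω, htb ω k * (starRingEnd ℂ) (htb ω l) ∂μ = if k = l then 1 else 0)
    (hab_indep : ProbabilityTheory.IndepFun hta htb μ)
    (habΔ_indep : ProbabilityTheory.IndepFun (fun ω => (hta ω, htb ω))
      (fun ω => fun ℓ => Δθ ℓ ω) μ)
    (ha hb : Ω → Fin L → ℂ)
    (hha : ∀ ω ℓ, ha ω ℓ = (Real.sqrt (ε / (ε + 1)) : ℂ) * Complex.exp (Complex.I * (a ℓ : ℂ))
      + (Real.sqrt (1 / (ε + 1)) : ℂ) * hta ω ℓ)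
    (hhb : ∀ ω ℓ, hb ω ℓ = (Real.sqrt (β / (β + 1)) : ℂ) * Complex.exp (Complex.I * (b ℓ : ℂ))
      + (Real.sqrt (1 / (β + 1)) : ℂ) * htb ω ℓ) :
    ∫ ω, ‖(∑ ℓ : Fin L,
        hb ω ℓ * Complex.exp (Complex.I * (θ ℓ : ℂ)) *
          Complex.exp (Complex.I * (Δθ ℓ ω : ℂ)) * ha ω ℓ)‖ ^ 2 ∂μ =
      (ε * β * ((L : ℝ) + 2 * χ ^ 2 *
          ∑ n : Fin L, ∑ m ∈ Finset.univ.filter (fun m => m < n),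
            Real.cos ((θ n + a n + b n) - (θ m + a m + b m)))
        + (L : ℝ) * (ε + β) + (L : ℝ)) / ((ε + 1) * (β + 1)) :=
  cascaded_rician_second_moment_phase_noise_general μ L θ a b ε β χ hε hβ Δθ hΔθ_meas hΔθ_indep
    hΔθ_cos hΔθ_sin hta htb hta_l2 htb_l2 hta_mean htb_mean hta_cov htb_cov hab_indep habΔ_indep ha
    hb hha hhb
end

section
/- Let L ≥ 1, let ψ_1,…,ψ_L be real numbers, and let Δθ_1,…,Δθ_L be independent real-valued random variables with E[cos Δθ_ℓ] = χ and E[sin Δθ_ℓ] = 0 for all ℓ. Then E[|Σ_{ℓ=1}^L e^{i(ψ_ℓ + Δθ_ℓ)}|²] = L + 2χ² Σ_{1 ≤ m < n ≤ L} cos(ψ_n − ψ_m). -/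
/-!
Expanding the square gives `‖∑ ℓ, exp (I θ_ℓ)‖² = ∑ ℓ, ∑ n, cos (θ_ℓ - θ_n)`. The diagonal terms
are `1`. Off the diagonal, independence factorises `E cos (θ_ℓ - θ_n)` into
`E cos θ_ℓ · E cos θ_n + E sin θ_ℓ · E sin θ_n`, and since `E sin Δθ = 0` the shifted phase
`θ = ψ + Δθ` has `E cos θ = χ cos ψ` and `E sin θ = χ sin ψ`; so each off-diagonal term is
`χ² cos (ψ_ℓ - ψ_n)`, and the symmetric off-diagonal sum is twice the sum over `m < n`.
-/

open MeasureTheory ProbabilityTheory Complex Finset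

theorem Finset.sum_sum_eq_sum_diag_add_two_mul_sum_lt {ι M : Type*} [Fintype ι] [LinearOrder ι]
    [NonAssocSemiring M] (f : ι → ι → M) (hf : ∀ i j, f i j = f j i) :
    ∑ i, ∑ j, f i j = ∑ i, f i i + 2 * ∑ j, ∑ i ∈ univ.filter (fun i => i < j), f i j := by
  have hsplit : ∀ i j, f i j = (if i < j then f i j else 0) + (if i = j then f i j else 0) +
      (if j < i then f j i else 0) := by
    intro i j
    rcases lt_trichotomy i j with h | rfl | h
    · simp [h, h.ne, h.not_gt]
    · simp
    · simp [h, h.ne', h.not_gt, hf i j]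
  rw [sum_congr rfl fun i _ => sum_congr rfl fun j _ => hsplit i j]
  simp only [sum_add_distrib, sum_ite_eq, mem_univ, if_true]
  rw [sum_comm (f := fun i j => if i < j then f i j else 0)]
  simp only [← sum_filter]
  rw [two_mul]
  abel

theorem Complex.norm_sum_exp_I_mul_sq {ι : Type*} (s : Finset ι) (θ : ι → ℝ) :
    ‖∑ i ∈ s, exp (I * (θ i : ℂ))‖ ^ 2 = ∑ i ∈ s, ∑ j ∈ s, Real.cos (θ i - θ j) := by
  have hre : (∑ i ∈ s, exp (I * (θ i : ℂ))).re = ∑ i ∈ s, Real.cos (θ i) := by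
    simp [re_sum, mul_comm I, exp_ofReal_mul_I_re]
  have him : (∑ i ∈ s, exp (I * (θ i : ℂ))).im = ∑ i ∈ s, Real.sin (θ i) := by
    simp [im_sum, mul_comm I, exp_ofReal_mul_I_im]
  simp_rw [Complex.sq_norm, normSq_apply, hre, him, sum_mul_sum, ← sum_add_distrib, Real.cos_sub]

namespace ProbabilityTheory

variable {Ω : Type*} [MeasurableSpace Ω] {μ : Measure Ω} [IsFiniteMeasure μ]

theorem integrable_cos_comp {X : Ω → ℝ} (hX : AEMeasurable X μ) :
    Integrable (fun ω => Real.cos (X ω)) μ :=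
  .of_bound (Real.continuous_cos.comp_aestronglyMeasurable hX.aestronglyMeasurable) 1
    (ae_of_all _ fun _ => by simpa using Real.abs_cos_le_one _)

theorem integrable_sin_comp {X : Ω → ℝ} (hX : AEMeasurable X μ) :
    Integrable (fun ω => Real.sin (X ω)) μ :=
  .of_bound (Real.continuous_sin.comp_aestronglyMeasurable hX.aestronglyMeasurable) 1
    (ae_of_all _ fun _ => by simpa using Real.abs_sin_le_one _)

theorem integral_cos_const_add {X : Ω → ℝ} (hX : AEMeasurable X μ) (a : ℝ) :
    ∫ ω, Real.cos (a + X ω) ∂μ =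
      Real.cos a * ∫ ω, Real.cos (X ω) ∂μ - Real.sin a * ∫ ω, Real.sin (X ω) ∂μ := by
  simp_rw [Real.cos_add]
  rw [integral_sub ((integrable_cos_comp hX).const_mul _) ((integrable_sin_comp hX).const_mul _),
    integral_const_mul, integral_const_mul]

theorem integral_sin_const_add {X : Ω → ℝ} (hX : AEMeasurable X μ) (a : ℝ) :
    ∫ ω, Real.sin (a + X ω) ∂μ =
      Real.sin a * ∫ ω, Real.cos (X ω) ∂μ + Real.cos a * ∫ ω, Real.sin (X ω) ∂μ := by
  simp_rw [Real.sin_add]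
  rw [integral_add ((integrable_cos_comp hX).const_mul _) ((integrable_sin_comp hX).const_mul _),
    integral_const_mul, integral_const_mul]

theorem IndepFun.integral_cos_sub {U V : Ω → ℝ} (hUV : U ⟂ᵢ[μ] V) (hU : AEMeasurable U μ)
    (hV : AEMeasurable V μ) :
    ∫ ω, Real.cos (U ω - V ω) ∂μ =
      (∫ ω, Real.cos (U ω) ∂μ) * (∫ ω, Real.cos (V ω) ∂μ) +
        (∫ ω, Real.sin (U ω) ∂μ) * (∫ ω, Real.sin (V ω) ∂μ) := by
  have hcc : Integrable (fun ω => Real.cos (U ω) * Real.cos (V ω)) μ :=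
    (integrable_cos_comp hV).bdd_mul (c := 1) (integrable_cos_comp hU).aestronglyMeasurable
      (ae_of_all _ fun _ => by simpa using Real.abs_cos_le_one _)
  have hss : Integrable (fun ω => Real.sin (U ω) * Real.sin (V ω)) μ :=
    (integrable_sin_comp hV).bdd_mul (c := 1) (integrable_sin_comp hU).aestronglyMeasurable
      (ae_of_all _ fun _ => by simpa using Real.abs_sin_le_one _)
  simp_rw [Real.cos_sub]
  rw [integral_add hcc hss,
    hUV.integral_fun_comp_mul_comp hU hV Real.continuous_cos.aestronglyMeasurable
      Real.continuous_cos.aestronglyMeasurable,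
    hUV.integral_fun_comp_mul_comp hU hV Real.continuous_sin.aestronglyMeasurable
      Real.continuous_sin.aestronglyMeasurable]

theorem IndepFun.integral_cos_const_add_sub_const_add {X Y : Ω → ℝ} (hXY : X ⟂ᵢ[μ] Y)
    (hX : AEMeasurable X μ) (hY : AEMeasurable Y μ) (hsX : ∫ ω, Real.sin (X ω) ∂μ = 0)
    (hsY : ∫ ω, Real.sin (Y ω) ∂μ = 0) (a b : ℝ) :
    ∫ ω, Real.cos ((a + X ω) - (b + Y ω)) ∂μ =
      (∫ ω, Real.cos (X ω) ∂μ) * (∫ ω, Real.cos (Y ω) ∂μ) * Real.cos (a - b) := by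
  have hshift : (fun ω => a + X ω) ⟂ᵢ[μ] (fun ω => b + Y ω) :=
    hXY.comp (measurable_const_add a) (measurable_const_add b)
  rw [hshift.integral_cos_sub (hX.const_add a) (hY.const_add b), integral_cos_const_add hX,
    integral_cos_const_add hY, integral_sin_const_add hX, integral_sin_const_add hY, hsX, hsY,
    Real.cos_sub]
  ring

end ProbabilityTheory

theorem expected_squared_modulus_phase_noise_general {Ω : Type*} [MeasurableSpace Ω] (μ : Measure Ω)
    [IsProbabilityMeasure μ] (L : ℕ) (ψ : Fin L → ℝ) (Δθ : Fin L → Ω → ℝ)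
    (hmeas : ∀ ℓ, Measurable (Δθ ℓ))
    (hindep : ProbabilityTheory.iIndepFun Δθ μ) (χ : ℝ)
    (hcos : ∀ ℓ, ∫ ω, Real.cos (Δθ ℓ ω) ∂μ = χ)
    (hsin : ∀ ℓ, ∫ ω, Real.sin (Δθ ℓ ω) ∂μ = 0) :
    ∫ ω, ‖∑ ℓ : Fin L, Complex.exp (Complex.I * ((ψ ℓ + Δθ ℓ ω : ℝ) : ℂ))‖ ^ 2 ∂μ =
      (L : ℝ) + 2 * χ ^ 2 * ∑ n : Fin L, ∑ m ∈ Finset.univ.filter (fun m => m < n),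
        Real.cos (ψ n - ψ m) := by
  have hint : ∀ ℓ n, Integrable (fun ω => Real.cos ((ψ ℓ + Δθ ℓ ω) - (ψ n + Δθ n ω))) μ :=
    fun ℓ n => integrable_cos_comp (by fun_prop)
  have hsymm : ∀ m n, ∫ ω, Real.cos ((ψ m + Δθ m ω) - (ψ n + Δθ n ω)) ∂μ =
      ∫ ω, Real.cos ((ψ n + Δθ n ω) - (ψ m + Δθ m ω)) ∂μ :=
    fun m n => integral_congr_ae (ae_of_all _ fun ω => by beta_reduce; rw [← Real.cos_neg, neg_sub])
  have hoff : ∑ n : Fin L, ∑ m ∈ univ.filter (fun m => m < n),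
      ∫ ω, Real.cos ((ψ m + Δθ m ω) - (ψ n + Δθ n ω)) ∂μ =
        χ ^ 2 * ∑ n : Fin L, ∑ m ∈ univ.filter (fun m => m < n), Real.cos (ψ n - ψ m) := by
    simp only [mul_sum]
    refine sum_congr rfl fun n _ => sum_congr rfl fun m hm => ?_
    rw [(hindep.indepFun (mem_filter.1 hm).2.ne).integral_cos_const_add_sub_const_add
      (hmeas m).aemeasurable (hmeas n).aemeasurable (hsin m) (hsin n), hcos, hcos,
      ← Real.cos_neg, neg_sub, sq]
  simp_rw [norm_sum_exp_I_mul_sq]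
  rw [integral_finsetSum _ fun ℓ _ => integrable_finsetSum _ fun n _ => hint ℓ n]
  simp_rw [integral_finsetSum _ fun n _ => hint _ n]
  rw [sum_sum_eq_sum_diag_add_two_mul_sum_lt _ hsymm, hoff]
  simp [mul_assoc]

/-- For `L ≥ 1`, real numbers `ψ_1, …, ψ_L`, and independent real random phase
errors `Δθ_1, …, Δθ_L` with `E[cos Δθ_ℓ] = χ` and `E[sin Δθ_ℓ] = 0` for all `ℓ`, the expected
squared modulus of `∑_ℓ e^{i(ψ_ℓ + Δθ_ℓ)}` equals
`L + 2 χ² ∑_{1 ≤ m < n ≤ L} cos (ψ_n - ψ_m)`. -/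
theorem expected_squared_modulus_phase_noise {Ω : Type*} [MeasurableSpace Ω] (μ : Measure Ω)
    [IsProbabilityMeasure μ] (L : ℕ) (hL : 1 ≤ L) (ψ : Fin L → ℝ) (Δθ : Fin L → Ω → ℝ)
    (hmeas : ∀ ℓ, Measurable (Δθ ℓ))
    (hindep : ProbabilityTheory.iIndepFun Δθ μ) (χ : ℝ)
    (hcos : ∀ ℓ, ∫ ω, Real.cos (Δθ ℓ ω) ∂μ = χ)
    (hsin : ∀ ℓ, ∫ ω, Real.sin (Δθ ℓ ω) ∂μ = 0) :
    ∫ ω, ‖∑ ℓ : Fin L, Complex.exp (Complex.I * ((ψ ℓ + Δθ ℓ ω : ℝ) : ℂ))‖ ^ 2 ∂μ =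
      (L : ℝ) + 2 * χ ^ 2 * ∑ n : Fin L, ∑ m ∈ Finset.univ.filter (fun m => m < n),
        Real.cos (ψ n - ψ m) :=
  expected_squared_modulus_phase_noise_general μ L ψ Δθ hmeas hindep χ hcos hsin
end

section
/- Let L ≥ 1. Let θ_1,…,θ_L, a_1,…,a_L, b_1,…,b_L be real numbers and set Θ = diag(e^{iθ_1},…,e^{iθ_L}). Let h̄_a, h̄_b ∈ ℂ^L have entries h̄_{a,ℓ} = e^{i a_ℓ} and h̄_{b,ℓ} = e^{i b_ℓ}. Let h̃_a, h̃_b be independent ℂ^L-valued random vectors with mean zero, E[h̃_a h̃_a^H] = I_L and E[h̃_b h̃_b^H] = I_L. For ε, β > 0 define h_a = √(ε/(ε+1)) h̄_a + √(1/(ε+1)) h̃_a and h_b = √(β/(β+1)) h̄_b + √(1/(β+1)) h̃_b. Then E[|h_b^T Θ h_a|²] = (ε β Γ + L(ε + β) + L)/((ε+1)(β+1)), where Γ = |Σ_{ℓ=1}^L e^{i(θ_ℓ + a_ℓ + b_ℓ)}|². -/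
/-!
Expanding `|h_bᵀ Θ h_a|²` as a double sum over pairs `(k, l)` and using independence, each term
factors into the correlations `E[h_{b,k} conj h_{b,l}] · E[h_{a,k} conj h_{a,l}]`. Each of these
is a rank-one line-of-sight part plus a diagonal scattering part. The product of the rank-one
parts sums to `|∑ e^{iθ_ℓ} h̄_{b,ℓ} h̄_{a,ℓ}|²`, which gives the `Γ` term, and the three terms
involving the diagonal contribute the same constant for each of the `L` indices.
-/

open MeasureTheory ProbabilityTheory Complex Finset
open scoped ComplexConjugate

section
variable {Ω ι : Type*} [MeasurableSpace Ω] {μ : Measure Ω}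

lemma MeasureTheory.MemLp.integrable_mul_conj {f g : Ω → ℂ} (hf : MemLp f 2 μ) (hg : MemLp g 2 μ) :
    Integrable (fun ω => f ω * conj (g ω)) μ :=
  hf.integrable_mul hg.star

lemma integral_add_mul_mul_conj_add_mul_s3 [IsProbabilityMeasure μ] {U V : Ω → ℂ}
    (hU : MemLp U 2 μ) (hV : MemLp V 2 μ) (hU0 : ∫ ω, U ω ∂μ = 0) (hV0 : ∫ ω, V ω ∂μ = 0)
    (u v : ℂ) (d : ℝ) :
    ∫ ω, (u + d * U ω) * conj (v + d * V ω) ∂μ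
      = u * conj v + d ^ 2 * ∫ ω, U ω * conj (V ω) ∂μ := by
  have expand : ∀ ω, (u + d * U ω) * conj (v + d * V ω)
      = u * conj v + (u * d * conj (V ω) + (d * conj v * U ω + d ^ 2 * (U ω * conj (V ω)))) := by
    intro ω
    simp only [map_add, map_mul, conj_ofReal]
    ring
  have i1 : Integrable (fun ω => u * d * conj (V ω)) μ :=
    (hV.star.integrable one_le_two).const_mul _
  have i2 : Integrable (fun ω => d * conj v * U ω) μ := (hU.integrable one_le_two).const_mul _
  have i3 : Integrable (fun ω => d ^ 2 * (U ω * conj (V ω))) μ :=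
    (hU.integrable_mul_conj hV).const_mul _
  simp only [expand]
  rw [integral_add (integrable_const _) (i1.fun_add (i2.fun_add i3)),
    integral_add i1 (i2.fun_add i3), integral_add i2 i3]
  simp [integral_const_mul, integral_conj, hU0, hV0]

variable [Fintype ι]

lemma ofReal_integral_norm_sum_mul_mul_sq {X Y : Ω → ι → ℂ} (hXY : IndepFun X Y μ)
    (hX : ∀ i, MemLp (fun ω => X ω i) 2 μ) (hY : ∀ i, MemLp (fun ω => Y ω i) 2 μ) (w : ι → ℂ) :
    ((∫ ω, ‖∑ i, X ω i * w i * Y ω i‖ ^ 2 ∂μ : ℝ) : ℂ) =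
      ∑ k, ∑ l, w k * conj (w l) *
        ((∫ ω, X ω k * conj (X ω l) ∂μ) * ∫ ω, Y ω k * conj (Y ω l) ∂μ) := by
  have expand : ∀ ω, ((‖∑ i, X ω i * w i * Y ω i‖ ^ 2 : ℝ) : ℂ) =
      ∑ k, ∑ l, w k * conj (w l) * ((X ω k * conj (X ω l)) * (Y ω k * conj (Y ω l))) := by
    intro ω
    rw [ofReal_pow, ← mul_conj', map_sum, sum_mul_sum]
    refine sum_congr rfl fun k _ => sum_congr rfl fun l _ => ?_
    simp only [map_mul]
    ring
  have indep : ∀ k l, IndepFun (fun ω => X ω k * conj (X ω l)) (fun ω => Y ω k * conj (Y ω l)) μ :=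
    fun k l => hXY.comp (φ := fun x : ι → ℂ => x k * conj (x l))
      (ψ := fun y : ι → ℂ => y k * conj (y l)) (by fun_prop) (by fun_prop)
  have integrable : ∀ k l, Integrable
      (fun ω => (X ω k * conj (X ω l)) * (Y ω k * conj (Y ω l))) μ := fun k l =>
    (indep k l).integrable_mul ((hX k).integrable_mul_conj (hX l))
      ((hY k).integrable_mul_conj (hY l))
  rw [← integral_complex_ofReal, integral_congr_ae (.of_forall expand),
    integral_finsetSum _ fun k _ => integrable_finsetSum _ fun l _ => (integrable k l).const_mul _]
  refine sum_congr rfl fun k _ => ?_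
  rw [integral_finsetSum _ fun l _ => (integrable k l).const_mul _]
  refine sum_congr rfl fun l _ => ?_
  rw [integral_const_mul, (indep k l).integral_fun_mul_eq_mul_integral
    ((hX k).integrable_mul_conj (hX l)).1 ((hY k).integrable_mul_conj (hY l)).1]

lemma integral_norm_sum_mul_mul_sq_of_corr [DecidableEq ι] {X Y : Ω → ι → ℂ}
    (hXY : IndepFun X Y μ) (hX : ∀ i, MemLp (fun ω => X ω i) 2 μ)
    (hY : ∀ i, MemLp (fun ω => Y ω i) 2 μ) (w x y : ι → ℂ) (s t : ℝ)
    (hXcorr : ∀ k l, ∫ ω, X ω k * conj (X ω l) ∂μ = x k * conj (x l) + s * if k = l then 1 else 0)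
    (hYcorr : ∀ k l, ∫ ω, Y ω k * conj (Y ω l) ∂μ = y k * conj (y l) + t * if k = l then 1 else 0) :
    ∫ ω, ‖∑ i, X ω i * w i * Y ω i‖ ^ 2 ∂μ
      = ‖∑ i, x i * w i * y i‖ ^ 2
        + ∑ i, ‖w i‖ ^ 2 * (‖x i‖ ^ 2 * t + s * ‖y i‖ ^ 2 + s * t) := by
  set q : ι → ℂ := fun i => x i * w i * y i
  set r : ι → ℝ := fun i => ‖w i‖ ^ 2 * (‖x i‖ ^ 2 * t + s * ‖y i‖ ^ 2 + s * t)
  have summand : ∀ k l, w k * conj (w l) * ((x k * conj (x l) + s * if k = l then 1 else 0)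
      * (y k * conj (y l) + t * if k = l then 1 else 0))
      = q k * conj (q l) + if k = l then (r k : ℂ) else 0 := by
    intro k l
    split_ifs with hkl
    · subst hkl
      simp only [q, r, map_mul]
      push_cast
      simp only [← mul_conj']
      ring
    · simp only [q, map_mul]
      ring
  apply ofReal_injective
  rw [ofReal_integral_norm_sum_mul_mul_sq hXY hX hY w]
  simp only [hXcorr, hYcorr, summand, sum_add_distrib, sum_ite_eq, mem_univ, if_true,
    ← sum_mul_sum, ← map_sum, mul_conj']
  push_cast
  rfl

end

section
variable {Ω ι : Type*} [MeasurableSpace Ω] {μ : Measure Ω}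

noncomputable def ricianLoS (κ : ℝ) (φ : ι → ℝ) : ι → ℂ :=
  fun ℓ => (Real.sqrt (κ / (κ + 1)) : ℂ) * exp (I * (φ ℓ : ℂ))

noncomputable def ricianChannel (κ : ℝ) (φ : ι → ℝ) (z : ι → ℂ) : ι → ℂ :=
  fun ℓ => ricianLoS κ φ ℓ + (Real.sqrt (1 / (κ + 1)) : ℂ) * z ℓ

lemma norm_ricianLoS_sq {κ : ℝ} (hκ : 0 ≤ κ) (φ : ι → ℝ) (ℓ : ι) :
    ‖ricianLoS κ φ ℓ‖ ^ 2 = κ / (κ + 1) := by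
  rw [ricianLoS, norm_mul, norm_exp_I_mul_ofReal, mul_one, norm_real, Real.norm_eq_abs, sq_abs,
    Real.sq_sqrt (by positivity)]

lemma sum_ricianLoS_mul_exp_mul_ricianLoS [Fintype ι] (κ₁ κ₂ : ℝ) (φ₁ φ₂ θ : ι → ℝ) :
    ∑ ℓ, ricianLoS κ₁ φ₁ ℓ * exp (I * θ ℓ) * ricianLoS κ₂ φ₂ ℓ
      = ((Real.sqrt (κ₁ / (κ₁ + 1)) * Real.sqrt (κ₂ / (κ₂ + 1)) : ℝ) : ℂ)
        * ∑ ℓ, exp (I * ((θ ℓ + φ₂ ℓ + φ₁ ℓ : ℝ) : ℂ)) := by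
  rw [mul_sum]
  refine sum_congr rfl fun ℓ _ => ?_
  simp only [ricianLoS]
  push_cast
  rw [mul_add, mul_add, exp_add, exp_add]
  ring

lemma measurable_ricianChannel (κ : ℝ) (φ : ι → ℝ) : Measurable (ricianChannel κ φ) := by
  unfold ricianChannel
  fun_prop

lemma memLp_ricianChannel [IsFiniteMeasure μ] {Z : Ω → ι → ℂ}
    (hZ : ∀ i, MemLp (fun ω => Z ω i) 2 μ) (κ : ℝ) (φ : ι → ℝ) (i : ι) :
    MemLp (fun ω => ricianChannel κ φ (Z ω) i) 2 μ :=
  MemLp.add (f := fun _ => _) (memLp_const _) ((hZ i).const_mul _)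

lemma integral_ricianChannel_mul_conj [IsProbabilityMeasure μ] [DecidableEq ι] {Z : Ω → ι → ℂ}
    (hZ : ∀ i, MemLp (fun ω => Z ω i) 2 μ) (hZ0 : ∀ i, ∫ ω, Z ω i ∂μ = 0)
    (hZcov : ∀ k l, ∫ ω, Z ω k * conj (Z ω l) ∂μ = if k = l then 1 else 0)
    {κ : ℝ} (hκ : 0 ≤ κ) (φ : ι → ℝ) (k l : ι) :
    ∫ ω, ricianChannel κ φ (Z ω) k * conj (ricianChannel κ φ (Z ω) l) ∂μ
      = ricianLoS κ φ k * conj (ricianLoS κ φ l) + (1 / (κ + 1) : ℝ) * if k = l then 1 else 0 := by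
  simp only [ricianChannel]
  rw [integral_add_mul_mul_conj_add_mul_s3 (hZ k) (hZ l) (hZ0 k) (hZ0 l), hZcov, ← ofReal_pow,
    Real.sq_sqrt (by positivity)]

end

theorem cascaded_rician_second_moment_no_phase_noise_general {Ω : Type*} [MeasurableSpace Ω]
    (μ : Measure Ω) [IsProbabilityMeasure μ] (L : ℕ)
    (θ a b : Fin L → ℝ) (ε β : ℝ) (hε : 0 < ε) (hβ : 0 < β)
    (hta htb : Ω → Fin L → ℂ)
    (hta_l2 : ∀ ℓ, MeasureTheory.MemLp (fun ω => hta ω ℓ) 2 μ)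
    (htb_l2 : ∀ ℓ, MeasureTheory.MemLp (fun ω => htb ω ℓ) 2 μ)
    (hta_mean : ∀ ℓ, ∫ ω, hta ω ℓ ∂μ = 0) (htb_mean : ∀ ℓ, ∫ ω, htb ω ℓ ∂μ = 0)
    (hta_cov : ∀ k l, ∫ ω, hta ω k * (starRingEnd ℂ) (hta ω l) ∂μ = if k = l then 1 else 0)
    (htb_cov : ∀ k l, ∫ ω, htb ω k * (starRingEnd ℂ) (htb ω l) ∂μ = if k = l then 1 else 0)
    (hindep : ProbabilityTheory.IndepFun hta htb μ)
    (ha hb : Ω → Fin L → ℂ)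
    (hha : ∀ ω ℓ, ha ω ℓ = (Real.sqrt (ε / (ε + 1)) : ℂ) * Complex.exp (Complex.I * (a ℓ : ℂ))
      + (Real.sqrt (1 / (ε + 1)) : ℂ) * hta ω ℓ)
    (hhb : ∀ ω ℓ, hb ω ℓ = (Real.sqrt (β / (β + 1)) : ℂ) * Complex.exp (Complex.I * (b ℓ : ℂ))
      + (Real.sqrt (1 / (β + 1)) : ℂ) * htb ω ℓ) :
    ∫ ω, ‖(∑ ℓ : Fin L,
        hb ω ℓ * Complex.exp (Complex.I * (θ ℓ : ℂ)) * ha ω ℓ)‖ ^ 2 ∂μ =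
      (ε * β * ‖(∑ ℓ : Fin L,
          Complex.exp (Complex.I * ((θ ℓ + a ℓ + b ℓ : ℝ) : ℂ)))‖ ^ 2
        + (L : ℝ) * (ε + β) + (L : ℝ)) / ((ε + 1) * (β + 1)) := by
  obtain rfl : ha = fun ω => ricianChannel ε a (hta ω) := funext fun ω => funext (hha ω)
  obtain rfl : hb = fun ω => ricianChannel β b (htb ω) := funext fun ω => funext (hhb ω)
  have hindep_channels : IndepFun (fun ω => ricianChannel β b (htb ω))
      (fun ω => ricianChannel ε a (hta ω)) μ :=
    hindep.symm.comp (measurable_ricianChannel β b) (measurable_ricianChannel ε a)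
  rw [integral_norm_sum_mul_mul_sq_of_corr hindep_channels (memLp_ricianChannel htb_l2 β b)
    (memLp_ricianChannel hta_l2 ε a) (fun ℓ => exp (I * θ ℓ)) _ _ _ _
    (integral_ricianChannel_mul_conj htb_l2 htb_mean htb_cov hβ.le b)
    (integral_ricianChannel_mul_conj hta_l2 hta_mean hta_cov hε.le a),
    sum_ricianLoS_mul_exp_mul_ricianLoS]
  have hβ' : 0 ≤ β / (β + 1) := by positivity
  have hε' : 0 ≤ ε / (ε + 1) := by positivity
  simp only [norm_ricianLoS_sq hβ.le, norm_ricianLoS_sq hε.le, norm_exp_I_mul_ofReal, norm_mul,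
    norm_real, mul_pow, Real.norm_eq_abs, sq_abs, Real.sq_sqrt hβ', Real.sq_sqrt hε', one_pow,
    one_mul, sum_const, card_univ, Fintype.card_fin, nsmul_eq_mul]
  field_simp
  ring

/-- Second moment of the cascaded Rician channel through an RIS with
deterministic phase-shift matrix `Θ = diag(e^{iθ_1}, …, e^{iθ_L})` and no phase noise:
with LoS components `h̄_{a,ℓ} = e^{i a_ℓ}`, `h̄_{b,ℓ} = e^{i b_ℓ}`, independent zero-mean
identity-covariance scattered components `h̃_a, h̃_b`, and Rician factors `ε, β > 0`,
the channels `h_a = √(ε/(ε+1)) h̄_a + √(1/(ε+1)) h̃_a` and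
`h_b = √(β/(β+1)) h̄_b + √(1/(β+1)) h̃_b` satisfy
`E[|h_b^T Θ h_a|²] = (ε β Γ + L(ε+β) + L)/((ε+1)(β+1))`, where
`Γ = |∑_ℓ e^{i(θ_ℓ + a_ℓ + b_ℓ)}|²`. -/
theorem cascaded_rician_second_moment_no_phase_noise {Ω : Type*} [MeasurableSpace Ω]
    (μ : Measure Ω) [IsProbabilityMeasure μ] (L : ℕ) (hL : 1 ≤ L)
    (θ a b : Fin L → ℝ) (ε β : ℝ) (hε : 0 < ε) (hβ : 0 < β)
    (hta htb : Ω → Fin L → ℂ)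
    (hta_meas : Measurable hta) (htb_meas : Measurable htb)
    (hta_l2 : ∀ ℓ, MeasureTheory.MemLp (fun ω => hta ω ℓ) 2 μ)
    (htb_l2 : ∀ ℓ, MeasureTheory.MemLp (fun ω => htb ω ℓ) 2 μ)
    (hta_mean : ∀ ℓ, ∫ ω, hta ω ℓ ∂μ = 0) (htb_mean : ∀ ℓ, ∫ ω, htb ω ℓ ∂μ = 0)
    (hta_cov : ∀ k l, ∫ ω, hta ω k * (starRingEnd ℂ) (hta ω l) ∂μ = if k = l then 1 else 0)
    (htb_cov : ∀ k l, ∫ ω, htb ω k * (starRingEnd ℂ) (htb ω l) ∂μ = if k = l then 1 else 0)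
    (hindep : ProbabilityTheory.IndepFun hta htb μ)
    (ha hb : Ω → Fin L → ℂ)
    (hha : ∀ ω ℓ, ha ω ℓ = (Real.sqrt (ε / (ε + 1)) : ℂ) * Complex.exp (Complex.I * (a ℓ : ℂ))
      + (Real.sqrt (1 / (ε + 1)) : ℂ) * hta ω ℓ)
    (hhb : ∀ ω ℓ, hb ω ℓ = (Real.sqrt (β / (β + 1)) : ℂ) * Complex.exp (Complex.I * (b ℓ : ℂ))
      + (Real.sqrt (1 / (β + 1)) : ℂ) * htb ω ℓ) :
    ∫ ω, ‖(∑ ℓ : Fin L,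
        hb ω ℓ * Complex.exp (Complex.I * (θ ℓ : ℂ)) * ha ω ℓ)‖ ^ 2 ∂μ =
      (ε * β * ‖(∑ ℓ : Fin L,
          Complex.exp (Complex.I * ((θ ℓ + a ℓ + b ℓ : ℝ) : ℂ)))‖ ^ 2
        + (L : ℝ) * (ε + β) + (L : ℝ)) / ((ε + 1) * (β + 1)) :=
  cascaded_rician_second_moment_no_phase_noise_general μ L θ a b ε β hε hβ hta htb hta_l2 htb_l2
    hta_mean htb_mean hta_cov htb_cov hindep ha hb hha hhb
end

section
/- Let E_u > 0, c > 0, ε > 0, β > 0, κ' > 0, σ² > 0. For each positive integer L define S(L) = (E_u / L) · c · (ε β L² + L(ε + β) + L) and R(L) = log₂(1 + S(L) / (κ' S(L) + σ²)). Then R(L) → log₂(1 + 1/κ') as L → ∞. -/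
open Filter

/-- Power-scaling law with transmit power `p = E_u / L` under transceiver
hardware impairments: with `S(L) = (E_u/L)·c·(εβL² + L(ε+β) + L)` and
`R(L) = log₂(1 + S(L)/(κ' S(L) + σ²))`, the rate `R(L)` converges to `log₂(1 + 1/κ')`
as `L → ∞`. -/
theorem power_scaling_L (Eu c ε β κ' σ2 : ℝ) (hEu : 0 < Eu) (hc : 0 < c) (hε : 0 < ε)
    (hβ : 0 < β) (hκ : 0 < κ') (hσ : 0 < σ2) :
    Filter.Tendsto
      (fun L : ℕ =>
        Real.logb 2
          (1 + (Eu / (L : ℝ) * c * (ε * β * (L : ℝ) ^ 2 + (L : ℝ) * (ε + β) + (L : ℝ))) /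
            (κ' * (Eu / (L : ℝ) * c * (ε * β * (L : ℝ) ^ 2 + (L : ℝ) * (ε + β) + (L : ℝ))) +
              σ2)))
      Filter.atTop
      (nhds (Real.logb 2 (1 + 1 / κ'))) := by
  set S : ℕ → ℝ := fun L =>
    Eu / (L : ℝ) * c * (ε * β * (L : ℝ) ^ 2 + (L : ℝ) * (ε + β) + (L : ℝ)) with hSdef
  have hSeq : ∀ᶠ L : ℕ in atTop, S L = Eu * c * (ε * β * (L : ℝ) + (ε + β) + 1) := by
    filter_upwards [eventually_ge_atTop 1] with L hL
    have hL0 : (L : ℝ) ≠ 0 := by positivity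
    simp only [hSdef]
    field_simp
  have hlin : Tendsto (fun L : ℕ => Eu * c * (ε * β * (L : ℝ) + (ε + β) + 1)) atTop atTop := by
    have h1 : Tendsto (fun L : ℕ => (L : ℝ)) atTop atTop := tendsto_natCast_atTop_atTop
    have h2 : Tendsto (fun L : ℕ => ε * β * (L : ℝ) + (ε + β) + 1) atTop atTop :=
      ((h1.const_mul_atTop (by positivity)).atTop_add tendsto_const_nhds).atTop_add
        tendsto_const_nhds
    exact h2.const_mul_atTop (by positivity)
  have hS : Tendsto S atTop atTop := hlin.congr' (hSeq.mono fun L h => h.symm)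
  have hSpos : ∀ᶠ L : ℕ in atTop, 0 < S L := hS.eventually_gt_atTop 0
  have hratio : Tendsto (fun L : ℕ => S L / (κ' * S L + σ2)) atTop (nhds (1 / κ')) := by
    have hσS : Tendsto (fun L : ℕ => σ2 / S L) atTop (nhds 0) :=
      Tendsto.div_atTop tendsto_const_nhds hS
    have hden : Tendsto (fun L : ℕ => κ' + σ2 / S L) atTop (nhds κ') := by
      simpa using (tendsto_const_nhds.add hσS)
    have hinv : Tendsto (fun L : ℕ => 1 / (κ' + σ2 / S L)) atTop (nhds (1 / κ')) :=
      tendsto_const_nhds.div hden (by positivity)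
    refine hinv.congr' ?_
    filter_upwards [hSpos] with L hL
    have h1 : κ' * S L + σ2 > 0 := by positivity
    field_simp
  have hcont : ContinuousAt (fun x : ℝ => Real.logb 2 (1 + x)) (1 / κ') := by
    exact (Real.continuousAt_logb (by positivity)).comp
      (continuousAt_const.add continuousAt_id)
  exact hcont.tendsto.comp hratio
end
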